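/- Let V be a finite-dimensional real vector space and W a finite-dimensional linear subspace of the space of symmetric bilinear forms on V. For every n ≥ 1, the set of W-independent n-tuples is an open subset of V^n (in the product topology). -/

import Mathlib

open Module

/-- `φ(span(vs) ⊗ W)`: the subspace of `V* = V →ₗ[ℝ] ℝ` spanned by the functionals
`w(v, −)` for `w ∈ W` and `v ∈ span(s)`. -/
noncomputable def phiSpan {V : Type*} [AddCommGroup V] [Module ℝ V]
    (W : Submodule ℝ (V →ₗ[ℝ] V →ₗ[ℝ] ℝ)) (s : Set V) : Submodule ℝ (V →ₗ[ℝ] ℝ) :=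
  Submodule.span ℝ {f | ∃ w ∈ W, ∃ v ∈ Submodule.span ℝ s, f = w v}

/-- A tuple `(v₁, …, vₙ)` is `W`-independent if `φ(span(v₁,…,vₙ) ⊗ W) ⊆ V*` has
dimension `n · dim W`. -/
def WIndep {V : Type*} [AddCommGroup V] [Module ℝ V]
    (W : Submodule ℝ (V →ₗ[ℝ] V →ₗ[ℝ] ℝ)) {n : ℕ} (vs : Fin n → V) : Prop :=
  finrank ℝ (phiSpan W (Set.range vs)) = n * finrank ℝ W

/-!
If `b` is a basis of `W`, bilinearity shows that `φ(span(v₁,…,vₙ) ⊗ W)` is spanned by the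
`n · dim W` functionals `b j (vᵢ, −)`, so `W`-independence says exactly that this family is
linearly independent. The family depends linearly, hence continuously, on `(vᵢ)`, and linear
independence of a finite family in a finite-dimensional normed space is an open condition.
-/

open Submodule

section

variable {V : Type*} [AddCommGroup V] [Module ℝ V] (W : Submodule ℝ (V →ₗ[ℝ] V →ₗ[ℝ] ℝ))

theorem phiSpan_eq_map₂ (s : Set V) : phiSpan W s = map₂ LinearMap.id W (span ℝ s) := by
  rw [map₂_eq_span_image2, phiSpan]
  congr 1
  ext f
  simp [Set.image2, eq_comm]

theorem phiSpan_eq_span_image2 {t : Set (V →ₗ[ℝ] V →ₗ[ℝ] ℝ)} (ht : span ℝ t = W) (s : Set V) :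
    phiSpan W s = span ℝ (Set.image2 (fun w v => w v) t s) := by
  subst ht
  rw [phiSpan_eq_map₂, map₂_span_span]
  rfl

theorem wIndep_iff_linearIndependent {ι : Type*} [Fintype ι] (b : Basis ι ℝ W) {n : ℕ}
    (vs : Fin n → V) :
    WIndep W vs ↔
      LinearIndependent ℝ fun p : ι × Fin n => (b p.1 : V →ₗ[ℝ] V →ₗ[ℝ] ℝ) (vs p.2) := by
  have hb : span ℝ (Set.range fun i => (b i : V →ₗ[ℝ] V →ₗ[ℝ] ℝ)) = W := by
    have := congrArg (map W.subtype) b.span_eq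
    rwa [map_span, map_subtype_top, ← Set.range_comp] at this
  rw [WIndep, phiSpan_eq_span_image2 W hb, Set.image2_range,
    linearIndependent_iff_card_eq_finrank_span, Set.finrank, Fintype.card_prod, Fintype.card_fin,
    finrank_eq_card_basis b, mul_comm, eq_comm]

end

theorem isOpen_setOf_linearIndependent_apply {𝕜 E F : Type*} [NontriviallyNormedField 𝕜]
    [CompleteSpace 𝕜] [NormedAddCommGroup E] [NormedSpace 𝕜 E] [FiniteDimensional 𝕜 E]
    [NormedAddCommGroup F] [NormedSpace 𝕜 F] [FiniteDimensional 𝕜 F] {ι κ : Type*} [Finite ι]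
    [Finite κ] (L : ι → E →ₗ[𝕜] F →ₗ[𝕜] 𝕜) :
    IsOpen {x : κ → E | LinearIndependent 𝕜 fun p : ι × κ => L p.1 (x p.2)} := by
  let e : (F →ₗ[𝕜] 𝕜) ≃ₗ[𝕜] F →L[𝕜] 𝕜 := LinearMap.toContinuousLinearMap
  have hcont : Continuous fun (x : κ → E) (p : ι × κ) => e (L p.1 (x p.2)) :=
    continuous_pi fun p =>
      (LinearMap.continuous_of_finiteDimensional (e.toLinearMap ∘ₗ L p.1)).comp
        (continuous_apply p.2)
  have hset : {x : κ → E | LinearIndependent 𝕜 fun p : ι × κ => L p.1 (x p.2)} =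
      (fun (x : κ → E) (p : ι × κ) => e (L p.1 (x p.2))) ⁻¹' {f | LinearIndependent 𝕜 f} :=
    Set.ext fun _ => (e.toLinearMap.linearIndependent_iff e.ker).symm
  rw [hset]
  exact isOpen_setOfPred_linearIndependent.preimage hcont

theorem WIndep_isOpen_general
    {V : Type*} [NormedAddCommGroup V] [NormedSpace ℝ V] [FiniteDimensional ℝ V]
    (W : Submodule ℝ (V →ₗ[ℝ] V →ₗ[ℝ] ℝ))
    [Module.Finite ℝ W]
    (n : ℕ) :
    IsOpen {vs : Fin n → V | WIndep W vs} := by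
  -- instance search fails to unify the two additive structures on bilinear forms here
  let _ : AddCommGroup W := @Submodule.addCommGroup ℝ _ _ LinearMap.addCommGroup _ W
  let b := Module.finBasis ℝ W
  simp_rw [wIndep_iff_linearIndependent W b]
  exact isOpen_setOf_linearIndependent_apply fun j => (b j : V →ₗ[ℝ] V →ₗ[ℝ] ℝ)

theorem WIndep_isOpen
    {V : Type*} [NormedAddCommGroup V] [NormedSpace ℝ V] [FiniteDimensional ℝ V]
    (W : Submodule ℝ (V →ₗ[ℝ] V →ₗ[ℝ] ℝ))
    (hsymm : ∀ w ∈ W, ∀ u v : V, w u v = w v u)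
    [Module.Finite ℝ W]
    (n : ℕ) (hn : 1 ≤ n) :
    IsOpen {vs : Fin n → V | WIndep W vs} :=
  WIndep_isOpen_general W n
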